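/- For x, y ∈ {0,1}^N, the average over uniformly random permutations σ of [N] satisfies (1/N!) ∑_{σ ∈ S_N} ∑_{A⊆[N],|A|=n} ∏_{j∈A} (1 - x[j]/p)(1 - y[σ(j)]/p) = C(N,n) Q_n(‖x‖;N,p) Q_n(‖y‖;N,p). -/

import Mathlib

/-!
Write `e_n(a) = ∑_{|A| = n} ∏_{j ∈ A} a j` for the elementary symmetric functions. After swapping
the sums, the inner sum `∑_σ ∏_{j ∈ A} b (σ j)` does not depend on the `n`-subset `A`, because
the permutations act transitively on `n`-subsets; averaging it over `A` and using that `e_n` is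
symmetric gives `C(N,n) · ∑_σ ∑_A ∏_{j ∈ A} a j b (σ j) = N! · e_n(a) · e_n(b)`.
Finally `∏_j (1 + a j s) = ∑_n e_n(a) sⁿ`, and for `a j = 1 - x j / p` this product equals
`(1 - (1-p)/p · s)^‖x‖ (1 + s)^(N - ‖x‖)`, so comparing coefficients `e_n(a) = C(N,n) Q_n(‖x‖)`.
-/

open Finset Polynomial

lemma Finset.exists_perm_image_eq {ι : Type*} [DecidableEq ι] {A B : Finset ι} (h : #A = #B) :
    ∃ σ : Equiv.Perm ι, A.image σ = B := by
  have := Set.powersetCard.isPretransitive (α := ι) (n := #B)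
  obtain ⟨σ, hσ⟩ := MulAction.exists_smul_eq (Equiv.Perm ι)
    (⟨A, h⟩ : Set.powersetCard ι #B) ⟨B, rfl⟩
  exact ⟨σ, by simpa [Subtype.ext_iff, Finset.smul_finset_def] using hσ⟩

section Symmetric

variable {ι R : Type*} [Fintype ι] [CommSemiring R]

lemma sum_powersetCard_prod_comp_perm (b : ι → R) (σ : Equiv.Perm ι) (n : ℕ) :
    ∑ A ∈ powersetCard n univ, ∏ j ∈ A, b (σ j) = ∑ A ∈ powersetCard n univ, ∏ j ∈ A, b j := by
  conv_rhs => rw [← map_univ_equiv σ, powersetCard_map, sum_map]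
  simp

variable [DecidableEq ι]

lemma sum_perm_prod_comp_image (b : ι → R) (A : Finset ι) (τ : Equiv.Perm ι) :
    ∑ σ : Equiv.Perm ι, ∏ j ∈ A.image τ, b (σ j) = ∑ σ : Equiv.Perm ι, ∏ j ∈ A, b (σ j) := by
  simp only [prod_image fun i _ j _ h => τ.injective h]
  exact Fintype.sum_equiv (Equiv.mulRight τ) _ _ fun σ => rfl

lemma sum_perm_prod_comp_eq_of_card_eq (b : ι → R) {A B : Finset ι} (h : #A = #B) :
    ∑ σ : Equiv.Perm ι, ∏ j ∈ A, b (σ j) = ∑ σ : Equiv.Perm ι, ∏ j ∈ B, b (σ j) := by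
  obtain ⟨τ, rfl⟩ := exists_perm_image_eq h
  exact (sum_perm_prod_comp_image b A τ).symm

theorem choose_mul_sum_perm_sum_powersetCard_prod (a b : ι → R) (n : ℕ) :
    (Fintype.card ι).choose n *
        ∑ σ : Equiv.Perm ι, ∑ A ∈ powersetCard n univ, ∏ j ∈ A, (a j * b (σ j)) =
      (Fintype.card ι).factorial * (∑ A ∈ powersetCard n univ, ∏ j ∈ A, a j) *
        ∑ A ∈ powersetCard n univ, ∏ j ∈ A, b j := by
  set f : Finset ι → R := fun A => ∑ σ : Equiv.Perm ι, ∏ j ∈ A, b (σ j)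
  have hf : ∀ A ∈ powersetCard n univ,
      (Fintype.card ι).choose n * f A = ∑ B ∈ powersetCard n univ, f B := by
    intro A hA
    rw [← card_univ (α := ι), ← card_powersetCard, ← nsmul_eq_mul, ← sum_const]
    refine sum_congr rfl fun B hB => sum_perm_prod_comp_eq_of_card_eq b ?_
    rw [(mem_powersetCard.1 hA).2, (mem_powersetCard.1 hB).2]
  have htotal : ∑ B ∈ powersetCard n univ, f B =
      (Fintype.card ι).factorial * ∑ A ∈ powersetCard n univ, ∏ j ∈ A, b j := by
    rw [sum_comm]
    simp [sum_powersetCard_prod_comp_perm, Fintype.card_perm]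
  have hswap : ∑ σ : Equiv.Perm ι, ∑ A ∈ powersetCard n univ, ∏ j ∈ A, (a j * b (σ j)) =
      ∑ A ∈ powersetCard n univ, (∏ j ∈ A, a j) * f A := by
    simp only [f, sum_comm (s := univ), prod_mul_distrib, mul_sum]
  calc _ = ∑ A ∈ powersetCard n univ, (∏ j ∈ A, a j) * ((Fintype.card ι).choose n * f A) := by
        rw [hswap, mul_sum]
        exact sum_congr rfl fun A _ => mul_left_comm _ _ _
    _ = _ := by
        rw [sum_congr rfl fun A hA => by rw [hf A hA], ← sum_mul, htotal]
        ring

end Symmetric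

section GeneratingFunction

variable {ι : Type*} [Fintype ι]

lemma coeff_prod_one_add_C_mul_X {R : Type*} [CommSemiring R] (a : ι → R) (n : ℕ) :
    (∏ j, (1 + C (a j) * X)).coeff n = ∑ A ∈ powersetCard n univ, ∏ j ∈ A, a j := by
  classical
  simp only [prod_one_add, prod_mul_distrib, prod_const, ← map_prod, finsetSum_coeff,
    coeff_C_mul_X_pow, powersetCard_eq_filter, sum_filter, eq_comm (a := n)]

lemma prod_one_add_indicator_mul {p : ℝ} (hp : p ≠ 0) (x : ι → Bool) (s : ℝ) :
    ∏ j, (1 + (1 - (if x j then (1 : ℝ) else 0) / p) * s) =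
      (1 - ((1 - p) / p) * s) ^ #{j | x j = true} *
        (1 + s) ^ (Fintype.card ι - #{j | x j = true}) := by
  have hfactor : ∀ j, 1 + (1 - (if x j then (1 : ℝ) else 0) / p) * s =
      if x j = true then 1 - ((1 - p) / p) * s else 1 + s := by
    intro j
    cases x j
    · simp
    · simp only [if_true]
      field_simp
      ring
  have hcompl : #{j | ¬x j = true} = Fintype.card ι - #{j | x j = true} :=
    eq_tsub_of_add_eq ((add_comm _ _).trans (card_filter_add_card_filter_not _))
  rw [prod_congr rfl fun j _ => hfactor j, prod_ite, prod_const, prod_const, hcompl]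

end GeneratingFunction

lemma sum_powersetCard_prod_eq_choose_mul {N : ℕ} {p : ℝ} (hp : p ≠ 0) {Q : ℕ → ℕ → ℝ}
    (hQ : ∀ x ≤ N, ∀ s : ℝ,
      ∑ n ∈ range (N + 1), (N.choose n : ℝ) * Q n x * s ^ n
        = (1 - ((1 - p) / p) * s) ^ x * (1 + s) ^ (N - x))
    (x : Fin N → Bool) {w : ℕ} (hw : w = #{j | x j = true}) (n : ℕ) :
    ∑ A ∈ powersetCard n univ, ∏ j ∈ A, (1 - (if x j then (1 : ℝ) else 0) / p) =
      N.choose n * Q n w := by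
  have hwN : w ≤ N := hw ▸ (card_filter_le _ _).trans_eq (card_fin N)
  have hpoly : ∏ j, (1 + C (1 - (if x j then (1 : ℝ) else 0) / p) * X) =
      ∑ m ∈ range (N + 1), C (N.choose m * Q m w) * X ^ m := by
    refine Polynomial.funext fun s => ?_
    simp only [eval_prod, eval_finsetSum, eval_add, eval_mul, eval_C, eval_X, eval_one, eval_pow]
    rw [prod_one_add_indicator_mul hp, Fintype.card_fin, ← hw, ← hQ w hwN s]
  rw [← coeff_prod_one_add_C_mul_X, hpoly, finsetSum_coeff]
  simp only [coeff_C_mul_X_pow, sum_ite_eq, mem_range]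
  split_ifs with hn
  · rfl
  · rw [Nat.choose_eq_zero_of_lt (by omega), Nat.cast_zero, zero_mul]

theorem stmt_9_general (N : ℕ) (p : ℝ) (hp : 0 < p)
    (Q : ℕ → ℕ → ℝ)
    (hQ : ∀ x ≤ N, ∀ s : ℝ,
      ∑ n ∈ Finset.range (N + 1), (N.choose n : ℝ) * Q n x * s ^ n
        = (1 - ((1 - p) / p) * s) ^ x * (1 + s) ^ (N - x))
    (x y : Fin N → Bool) (wx wy : ℕ)
    (hwx : wx = (Finset.univ.filter (fun j => x j = true)).card)
    (hwy : wy = (Finset.univ.filter (fun j => y j = true)).card)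
    (n : ℕ) (hn : n ≤ N) :
    (1 / (N.factorial : ℝ)) *
        ∑ σ : Equiv.Perm (Fin N),
          ∑ A ∈ Finset.powersetCard n (Finset.univ : Finset (Fin N)),
            ∏ j ∈ A,
              ((1 - (if x j then (1 : ℝ) else 0) / p) *
                (1 - (if y (σ j) then (1 : ℝ) else 0) / p))
      = (N.choose n : ℝ) * Q n wx * Q n wy := by
  have hchoose : (N.choose n : ℝ) ≠ 0 := by exact_mod_cast (Nat.choose_pos hn).ne'
  have hfact : (N.factorial : ℝ) ≠ 0 := by positivity
  have key := choose_mul_sum_perm_sum_powersetCard_prod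
    (fun j => 1 - (if x j then (1 : ℝ) else 0) / p)
    (fun j => 1 - (if y j then (1 : ℝ) else 0) / p) n
  rw [Fintype.card_fin, sum_powersetCard_prod_eq_choose_mul hp.ne' hQ x hwx,
    sum_powersetCard_prod_eq_choose_mul hp.ne' hQ y hwy] at key
  rw [one_div, inv_mul_eq_iff_eq_mul₀ hfact]
  refine mul_left_cancel₀ hchoose (key.trans ?_)
  ring

theorem stmt_9 (N : ℕ) (p : ℝ) (hp : 0 < p) (hp1 : p < 1)
    (Q : ℕ → ℕ → ℝ)
    (hQ : ∀ x ≤ N, ∀ s : ℝ,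
      ∑ n ∈ Finset.range (N + 1), (N.choose n : ℝ) * Q n x * s ^ n
        = (1 - ((1 - p) / p) * s) ^ x * (1 + s) ^ (N - x))
    (x y : Fin N → Bool) (wx wy : ℕ)
    (hwx : wx = (Finset.univ.filter (fun j => x j = true)).card)
    (hwy : wy = (Finset.univ.filter (fun j => y j = true)).card)
    (n : ℕ) (hn : n ≤ N) :
    (1 / (N.factorial : ℝ)) *
        ∑ σ : Equiv.Perm (Fin N),
          ∑ A ∈ Finset.powersetCard n (Finset.univ : Finset (Fin N)),
            ∏ j ∈ A,
              ((1 - (if x j then (1 : ℝ) else 0) / p) *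
                (1 - (if y (σ j) then (1 : ℝ) else 0) / p))
      = (N.choose n : ℝ) * Q n wx * Q n wy :=
  stmt_9_general N p hp Q hQ x y wx wy hwx hwy n hn
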